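/- Let A and B be k-bialgebras and let τ : B⊗A → A⊗B be a twisting map. Then the twisted tensor product A⊗_τ B, equipped with the induced multiplication, unit, comultiplication and counit, is a k-bialgebra if and only if τ is the trivial twisting map, i.e. τ equals the flip b⊗a ↦ a⊗b. -/
import Mathlib


open scoped TensorProduct

namespace TTP

section Defs

variable (k : Type*) [Field k]

section MidMap

variable {X P Q Y R S : Type*}
  [AddCommGroup X] [Module k X] [AddCommGroup P] [Module k P]
  [AddCommGroup Q] [Module k Q] [AddCommGroup Y] [Module k Y]
  [AddCommGroup R] [Module k R] [AddCommGroup S] [Module k S]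

/-- The map `1_X ⊗ f ⊗ 1_Y` (with the canonical reassociations). -/
noncomputable def midMap (f : P ⊗[k] Q →ₗ[k] R ⊗[k] S) :
    (X ⊗[k] P) ⊗[k] (Q ⊗[k] Y) →ₗ[k] (X ⊗[k] R) ⊗[k] (S ⊗[k] Y) :=
  (TensorProduct.assoc k (X ⊗[k] R) S Y).toLinearMap
    ∘ₗ TensorProduct.map (TensorProduct.assoc k X R S).symm.toLinearMap LinearMap.id
    ∘ₗ TensorProduct.map (TensorProduct.map LinearMap.id f) LinearMap.id
    ∘ₗ TensorProduct.map (TensorProduct.assoc k X P Q).toLinearMap LinearMap.id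
    ∘ₗ (TensorProduct.assoc k (X ⊗[k] P) Q Y).symm.toLinearMap

end MidMap

variable {A B : Type*} [AddCommGroup A] [Module k A] [AddCommGroup B] [Module k B]

/-- `(A, mul, unit)` is a unital associative `k`-algebra (diagrammatically). -/
def IsUnitalAssoc (mul : A ⊗[k] A →ₗ[k] A) (unit : k →ₗ[k] A) : Prop :=
  mul ∘ₗ TensorProduct.map unit LinearMap.id ∘ₗ (TensorProduct.lid k A).symm.toLinearMap
      = LinearMap.id
  ∧ mul ∘ₗ TensorProduct.map LinearMap.id unit ∘ₗ (TensorProduct.rid k A).symm.toLinearMap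
      = LinearMap.id
  ∧ mul ∘ₗ TensorProduct.map mul LinearMap.id
      = mul ∘ₗ TensorProduct.map LinearMap.id mul ∘ₗ (TensorProduct.assoc k A A A).toLinearMap

/-- `(A, comul, counit)` is a counital coassociative `k`-coalgebra (diagrammatically). -/
def IsCounitalCoassoc (comul : A →ₗ[k] A ⊗[k] A) (counit : A →ₗ[k] k) : Prop :=
  (TensorProduct.lid k A).toLinearMap ∘ₗ TensorProduct.map counit LinearMap.id ∘ₗ comul
      = LinearMap.id
  ∧ (TensorProduct.rid k A).toLinearMap ∘ₗ TensorProduct.map LinearMap.id counit ∘ₗ comul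
      = LinearMap.id
  ∧ TensorProduct.map comul LinearMap.id ∘ₗ comul
      = (TensorProduct.assoc k A A A).symm.toLinearMap
          ∘ₗ TensorProduct.map LinearMap.id comul ∘ₗ comul

/-- `τ : B ⊗ A → A ⊗ B` is a twisting map for the algebras `A` and `B`:
it is compatible with both units and with both multiplications. -/
def IsTwisting (mulA : A ⊗[k] A →ₗ[k] A) (unitA : k →ₗ[k] A)
    (mulB : B ⊗[k] B →ₗ[k] B) (unitB : k →ₗ[k] B)
    (τ : B ⊗[k] A →ₗ[k] A ⊗[k] B) : Prop :=
  τ ∘ₗ TensorProduct.map LinearMap.id unitA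
      = TensorProduct.map unitA LinearMap.id ∘ₗ (TensorProduct.comm k B k).toLinearMap
  ∧ τ ∘ₗ TensorProduct.map unitB LinearMap.id
      = TensorProduct.map LinearMap.id unitB ∘ₗ (TensorProduct.comm k k A).toLinearMap
  ∧ τ ∘ₗ TensorProduct.map mulB mulA
      = TensorProduct.map mulA mulB ∘ₗ midMap k τ ∘ₗ TensorProduct.map τ τ ∘ₗ midMap k τ

/-- The multiplication `(∇_A ⊗ ∇_B) ∘ (1 ⊗ τ ⊗ 1)` of the twisted tensor product. -/
noncomputable def tMul (mulA : A ⊗[k] A →ₗ[k] A) (mulB : B ⊗[k] B →ₗ[k] B)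
    (τ : B ⊗[k] A →ₗ[k] A ⊗[k] B) :
    (A ⊗[k] B) ⊗[k] (A ⊗[k] B) →ₗ[k] A ⊗[k] B :=
  TensorProduct.map mulA mulB ∘ₗ midMap k τ

/-- The unit `(η_A ⊗ η_B) ∘ (k ≅ k ⊗ k)` of the twisted tensor product. -/
noncomputable def tUnit (unitA : k →ₗ[k] A) (unitB : k →ₗ[k] B) : k →ₗ[k] A ⊗[k] B :=
  TensorProduct.map unitA unitB ∘ₗ (TensorProduct.lid k k).symm.toLinearMap

/-- The comultiplication `(1 ⊗ τ⁻¹ ⊗ 1) ∘ (Δ_A ⊗ Δ_B)` of the twisted tensor product. -/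
noncomputable def tComul (comulA : A →ₗ[k] A ⊗[k] A) (comulB : B →ₗ[k] B ⊗[k] B)
    (τinv : A ⊗[k] B →ₗ[k] B ⊗[k] A) :
    A ⊗[k] B →ₗ[k] (A ⊗[k] B) ⊗[k] (A ⊗[k] B) :=
  midMap k τinv ∘ₗ TensorProduct.map comulA comulB

/-- The counit `(k ⊗ k ≅ k) ∘ (ε_A ⊗ ε_B)` of the twisted tensor product. -/
noncomputable def tCounit (counitA : A →ₗ[k] k) (counitB : B →ₗ[k] k) :
    A ⊗[k] B →ₗ[k] k :=
  (TensorProduct.lid k k).toLinearMap ∘ₗ TensorProduct.map counitA counitB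

/-- Compatibility of `τ` with the counits (diagram (5) of the paper). -/
def CounitCompat (counitA : A →ₗ[k] k) (counitB : B →ₗ[k] k)
    (τ : B ⊗[k] A →ₗ[k] A ⊗[k] B) : Prop :=
  TensorProduct.map counitA LinearMap.id ∘ₗ τ
      = (TensorProduct.comm k B k).toLinearMap ∘ₗ TensorProduct.map LinearMap.id counitA
  ∧ TensorProduct.map LinearMap.id counitB ∘ₗ τ
      = (TensorProduct.comm k k A).toLinearMap ∘ₗ TensorProduct.map counitB LinearMap.id

/-- Compatibility of `τ` with the comultiplications (diagram (6) of the paper):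
`(Δ_A ⊗ Δ_B)∘τ = (1⊗τ⊗1)∘(τ⊗τ)∘(1⊗τ⊗1)∘(Δ_B ⊗ Δ_A)`. -/
def ComulCompat (comulA : A →ₗ[k] A ⊗[k] A) (comulB : B →ₗ[k] B ⊗[k] B)
    (τ : B ⊗[k] A →ₗ[k] A ⊗[k] B) : Prop :=
  TensorProduct.map comulA comulB ∘ₗ τ
      = midMap k τ ∘ₗ TensorProduct.map τ τ ∘ₗ midMap k τ ∘ₗ TensorProduct.map comulB comulA

/-- `(f ⊗ 1_B) ∘ τ = (1_A ⊗ τ) ∘ (τ ⊗ 1_A) ∘ (1_B ⊗ f)` for `f : A → A ⊗ A`. -/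
def MidACompat (f : A →ₗ[k] A ⊗[k] A) (τ : B ⊗[k] A →ₗ[k] A ⊗[k] B) : Prop :=
  TensorProduct.map f LinearMap.id ∘ₗ τ
    = (TensorProduct.assoc k A A B).symm.toLinearMap
      ∘ₗ TensorProduct.map LinearMap.id τ
      ∘ₗ (TensorProduct.assoc k A B A).toLinearMap
      ∘ₗ TensorProduct.map τ LinearMap.id
      ∘ₗ (TensorProduct.assoc k B A A).symm.toLinearMap
      ∘ₗ TensorProduct.map LinearMap.id f

/-- `(1_A ⊗ g) ∘ τ = (τ ⊗ 1_B) ∘ (1_B ⊗ τ) ∘ (g ⊗ 1_A)` for `g : B → B ⊗ B`. -/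
def MidBCompat (g : B →ₗ[k] B ⊗[k] B) (τ : B ⊗[k] A →ₗ[k] A ⊗[k] B) : Prop :=
  TensorProduct.map LinearMap.id g ∘ₗ τ
    = (TensorProduct.assoc k A B B).toLinearMap
      ∘ₗ TensorProduct.map τ LinearMap.id
      ∘ₗ (TensorProduct.assoc k B A B).symm.toLinearMap
      ∘ₗ TensorProduct.map LinearMap.id τ
      ∘ₗ (TensorProduct.assoc k B B A).toLinearMap
      ∘ₗ TensorProduct.map g LinearMap.id

/-- `(A, mul, unit, comul, counit)` is a Frobenius algebra (diagrammatically). -/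
def IsFrobenius (mul : A ⊗[k] A →ₗ[k] A) (unit : k →ₗ[k] A)
    (comul : A →ₗ[k] A ⊗[k] A) (counit : A →ₗ[k] k) : Prop :=
  IsUnitalAssoc k mul unit
  ∧ IsCounitalCoassoc k comul counit
  ∧ comul ∘ₗ mul
      = TensorProduct.map LinearMap.id mul ∘ₗ (TensorProduct.assoc k A A A).toLinearMap
          ∘ₗ TensorProduct.map comul LinearMap.id
  ∧ comul ∘ₗ mul
      = TensorProduct.map mul LinearMap.id ∘ₗ (TensorProduct.assoc k A A A).symm.toLinearMap
          ∘ₗ TensorProduct.map LinearMap.id comul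

/-- `(A, mul, unit, comul, counit)` is a bialgebra (diagrammatically). -/
def IsBialgebra (mul : A ⊗[k] A →ₗ[k] A) (unit : k →ₗ[k] A)
    (comul : A →ₗ[k] A ⊗[k] A) (counit : A →ₗ[k] k) : Prop :=
  IsUnitalAssoc k mul unit
  ∧ IsCounitalCoassoc k comul counit
  ∧ counit ∘ₗ mul = (TensorProduct.lid k k).toLinearMap ∘ₗ TensorProduct.map counit counit
  ∧ comul ∘ₗ unit = TensorProduct.map unit unit ∘ₗ (TensorProduct.lid k k).symm.toLinearMap
  ∧ counit ∘ₗ unit = LinearMap.id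
  ∧ comul ∘ₗ mul
      = TensorProduct.map mul mul ∘ₗ midMap k (TensorProduct.comm k A A).toLinearMap
          ∘ₗ TensorProduct.map comul comul

/-- `(A, mul, unit, comul, counit)` is a Hopf algebra: a bialgebra with an antipode. -/
def IsHopf (mul : A ⊗[k] A →ₗ[k] A) (unit : k →ₗ[k] A)
    (comul : A →ₗ[k] A ⊗[k] A) (counit : A →ₗ[k] k) : Prop :=
  IsBialgebra k mul unit comul counit
  ∧ ∃ S : A →ₗ[k] A,
      mul ∘ₗ TensorProduct.map S LinearMap.id ∘ₗ comul = unit ∘ₗ counit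
      ∧ mul ∘ₗ TensorProduct.map LinearMap.id S ∘ₗ comul = unit ∘ₗ counit

/-- `Γ` is a right inverse of the multiplication which is a bimodule morphism,
witnessing separability of the algebra. -/
def IsSeparableWith (mul : A ⊗[k] A →ₗ[k] A) (Γ : A →ₗ[k] A ⊗[k] A) : Prop :=
  mul ∘ₗ Γ = LinearMap.id
  ∧ Γ ∘ₗ mul ∘ₗ TensorProduct.map LinearMap.id mul
      = TensorProduct.map mul mul
          ∘ₗ (TensorProduct.assoc k A A (A ⊗[k] A)).symm.toLinearMap
          ∘ₗ TensorProduct.map LinearMap.id (TensorProduct.assoc k A A A).toLinearMap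
          ∘ₗ TensorProduct.map LinearMap.id (TensorProduct.map Γ LinearMap.id)

/-- The pairing `β` is associative: `β∘(1⊗∇) = β∘(∇⊗1)`. -/
def PairingAssoc (mul : A ⊗[k] A →ₗ[k] A) (β : A ⊗[k] A →ₗ[k] k) : Prop :=
  β ∘ₗ TensorProduct.map LinearMap.id mul ∘ₗ (TensorProduct.assoc k A A A).toLinearMap
    = β ∘ₗ TensorProduct.map mul LinearMap.id

/-- The pairing `β` is non-degenerate with co-pairing `α`:
`(1⊗β)∘(α⊗1) = 1_A` under the canonical isomorphisms. -/
def PairingNondeg (β : A ⊗[k] A →ₗ[k] k) (α : k →ₗ[k] A ⊗[k] A) : Prop :=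
  (TensorProduct.rid k A).toLinearMap
      ∘ₗ TensorProduct.map LinearMap.id β
      ∘ₗ (TensorProduct.assoc k A A A).toLinearMap
      ∘ₗ TensorProduct.map α LinearMap.id
      ∘ₗ (TensorProduct.lid k A).symm.toLinearMap = LinearMap.id

/-- The pairing `β` is symmetric: `β ∘ σ = β` for the flip `σ`. -/
def PairingSymm (β : A ⊗[k] A →ₗ[k] k) : Prop :=
  β ∘ₗ (TensorProduct.comm k A A).toLinearMap = β

end Defs

end TTP


namespace TTP

section Aux

open TensorProduct

variable {k : Type*} [Field k]

section MidMapAux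

variable {X P Q Y R S : Type*}
  [AddCommGroup X] [Module k X] [AddCommGroup P] [Module k P]
  [AddCommGroup Q] [Module k Q] [AddCommGroup Y] [Module k Y]
  [AddCommGroup R] [Module k R] [AddCommGroup S] [Module k S]

theorem midMap_tmul (f : P ⊗[k] Q →ₗ[k] R ⊗[k] S) (x : X) (p : P) (q : Q) (y : Y) :
    midMap k f ((x ⊗ₜ p) ⊗ₜ (q ⊗ₜ y))
      = TensorProduct.map (TensorProduct.mk k X R x) ((TensorProduct.mk k S Y).flip y)
          (f (p ⊗ₜ q)) := by
  simp only [midMap, LinearMap.comp_apply, LinearEquiv.coe_coe, assoc_symm_tmul, map_tmul,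
    LinearMap.id_coe, id_eq, assoc_tmul]
  generalize f (p ⊗ₜ q) = w
  induction w using TensorProduct.induction_on with
  | zero => simp
  | tmul r s => simp [mk_apply]
  | add u v hu hv => simp [tmul_add, add_tmul, hu, hv]

theorem midMap_comm :
    midMap k (TensorProduct.comm k P Q).toLinearMap
      = (tensorTensorTensorComm k X P Q Y).toLinearMap := by
  ext x p q y
  simp [midMap_tmul, tensorTensorTensorComm_tmul, mk_apply]

end MidMapAux

section NatAux

variable {M N P Q M' N' P' Q' : Type*}
  [AddCommGroup M] [Module k M] [AddCommGroup N] [Module k N]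
  [AddCommGroup P] [Module k P] [AddCommGroup Q] [Module k Q]
  [AddCommGroup M'] [Module k M'] [AddCommGroup N'] [Module k N']
  [AddCommGroup P'] [Module k P'] [AddCommGroup Q'] [Module k Q']

theorem ttc_nat (f : M →ₗ[k] M') (g : N →ₗ[k] N') (h : P →ₗ[k] P') (l : Q →ₗ[k] Q') :
    (tensorTensorTensorComm k M' N' P' Q').toLinearMap
        ∘ₗ TensorProduct.map (TensorProduct.map f g) (TensorProduct.map h l)
      = TensorProduct.map (TensorProduct.map f h) (TensorProduct.map g l)
        ∘ₗ (tensorTensorTensorComm k M N P Q).toLinearMap := by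
  ext m n p q
  simp [tensorTensorTensorComm_tmul]

end NatAux

end Aux

end TTP

set_option maxHeartbeats 1600000 in
open TTP in
/-- Theorem 4.4 of the paper: the twisted tensor product of
bialgebras, with the induced structure maps, is a bialgebra iff the twisting map
is trivial, i.e. equal to the flip. -/
theorem twistedTensorProduct_isBialgebra_iff_trivial
    {k A B : Type*} [Field k]
    [AddCommGroup A] [Module k A] [AddCommGroup B] [Module k B]
    (mulA : A ⊗[k] A →ₗ[k] A) (unitA : k →ₗ[k] A)
    (comulA : A →ₗ[k] A ⊗[k] A) (counitA : A →ₗ[k] k)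
    (mulB : B ⊗[k] B →ₗ[k] B) (unitB : k →ₗ[k] B)
    (comulB : B →ₗ[k] B ⊗[k] B) (counitB : B →ₗ[k] k)
    (hA : IsBialgebra k mulA unitA comulA counitA)
    (hB : IsBialgebra k mulB unitB comulB counitB)
    (τ : B ⊗[k] A ≃ₗ[k] A ⊗[k] B)
    (hτ : IsTwisting k mulA unitA mulB unitB τ.toLinearMap) :
    IsBialgebra k (tMul k mulA mulB τ.toLinearMap) (tUnit k unitA unitB)
        (tComul k comulA comulB τ.symm.toLinearMap) (tCounit k counitA counitB)
      ↔ τ = TensorProduct.comm k B A := by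

  classical
  obtain ⟨⟨hAu1, hAu2, hAu3⟩, ⟨hAc1, hAc2, hAc3⟩, hAem, hAdu, hAeu, hAdm⟩ := hA
  obtain ⟨⟨hBu1, hBu2, hBu3⟩, ⟨hBc1, hBc2, hBc3⟩, hBem, hBdu, hBeu, hBdm⟩ := hB
  obtain ⟨hτ1, hτ2, hτ3⟩ := hτ
  rw [midMap_comm] at hAdm hBdm
  -- pointwise consequences of the axioms
  have hmA1 : ∀ a : A, mulA (unitA 1 ⊗ₜ a) = a := fun a => by
    have h := LinearMap.congr_fun hAu1 a
    simpa [TensorProduct.lid_symm_apply] using h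
  have hmA2 : ∀ a : A, mulA (a ⊗ₜ unitA 1) = a := fun a => by
    have h := LinearMap.congr_fun hAu2 a
    simpa [TensorProduct.rid_symm_apply] using h
  have hmB1 : ∀ b : B, mulB (unitB 1 ⊗ₜ b) = b := fun b => by
    have h := LinearMap.congr_fun hBu1 b
    simpa [TensorProduct.lid_symm_apply] using h
  have hmB2 : ∀ b : B, mulB (b ⊗ₜ unitB 1) = b := fun b => by
    have h := LinearMap.congr_fun hBu2 b
    simpa [TensorProduct.rid_symm_apply] using h
  have hassA : ∀ x y z : A, mulA (mulA (x ⊗ₜ y) ⊗ₜ z) = mulA (x ⊗ₜ mulA (y ⊗ₜ z)) :=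
    fun x y z => by
    have h := LinearMap.congr_fun hAu3 ((x ⊗ₜ y) ⊗ₜ z)
    simpa [TensorProduct.assoc_tmul] using h
  have hassB : ∀ x y z : B, mulB (mulB (x ⊗ₜ y) ⊗ₜ z) = mulB (x ⊗ₜ mulB (y ⊗ₜ z)) :=
    fun x y z => by
    have h := LinearMap.congr_fun hBu3 ((x ⊗ₜ y) ⊗ₜ z)
    simpa [TensorProduct.assoc_tmul] using h
  have hcA1 : ∀ a : A,
      (TensorProduct.lid k A) (TensorProduct.map counitA LinearMap.id (comulA a)) = a :=
    fun a => by simpa using LinearMap.congr_fun hAc1 a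
  have hcA2 : ∀ a : A,
      (TensorProduct.rid k A) (TensorProduct.map LinearMap.id counitA (comulA a)) = a :=
    fun a => by simpa using LinearMap.congr_fun hAc2 a
  have hcB1 : ∀ b : B,
      (TensorProduct.lid k B) (TensorProduct.map counitB LinearMap.id (comulB b)) = b :=
    fun b => by simpa using LinearMap.congr_fun hBc1 b
  have hcB2 : ∀ b : B,
      (TensorProduct.rid k B) (TensorProduct.map LinearMap.id counitB (comulB b)) = b :=
    fun b => by simpa using LinearMap.congr_fun hBc2 b
  have hcoA : ∀ a : A, TensorProduct.map comulA LinearMap.id (comulA a)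
      = (TensorProduct.assoc k A A A).symm (TensorProduct.map LinearMap.id comulA (comulA a)) :=
    fun a => by simpa using LinearMap.congr_fun hAc3 a
  have hcoB : ∀ b : B, TensorProduct.map comulB LinearMap.id (comulB b)
      = (TensorProduct.assoc k B B B).symm (TensorProduct.map LinearMap.id comulB (comulB b)) :=
    fun b => by simpa using LinearMap.congr_fun hBc3 b
  have hεmA : ∀ x y : A, counitA (mulA (x ⊗ₜ y)) = counitA x * counitA y := fun x y => by
    have h := LinearMap.congr_fun hAem (x ⊗ₜ y)
    simpa [smul_eq_mul] using h
  have hεmB : ∀ x y : B, counitB (mulB (x ⊗ₜ y)) = counitB x * counitB y := fun x y => by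
    have h := LinearMap.congr_fun hBem (x ⊗ₜ y)
    simpa [smul_eq_mul] using h
  have hΔA1 : comulA (unitA 1) = unitA 1 ⊗ₜ unitA 1 := by
    have h := LinearMap.congr_fun hAdu 1
    simpa [TensorProduct.lid_symm_apply] using h
  have hΔB1 : comulB (unitB 1) = unitB 1 ⊗ₜ unitB 1 := by
    have h := LinearMap.congr_fun hBdu 1
    simpa [TensorProduct.lid_symm_apply] using h
  have hεA1 : counitA (unitA 1) = 1 := by simpa using LinearMap.congr_fun hAeu 1
  have hεB1 : counitB (unitB 1) = 1 := by simpa using LinearMap.congr_fun hBeu 1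
  have hΔmA : ∀ x y : A, comulA (mulA (x ⊗ₜ y))
      = TensorProduct.map mulA mulA
          ((TensorProduct.tensorTensorTensorComm k A A A A) (comulA x ⊗ₜ comulA y)) :=
    fun x y => by simpa using LinearMap.congr_fun hAdm (x ⊗ₜ y)
  have hΔmB : ∀ x y : B, comulB (mulB (x ⊗ₜ y))
      = TensorProduct.map mulB mulB
          ((TensorProduct.tensorTensorTensorComm k B B B B) (comulB x ⊗ₜ comulB y)) :=
    fun x y => by simpa using LinearMap.congr_fun hBdm (x ⊗ₜ y)
  have ht1 : ∀ b : B, τ (b ⊗ₜ unitA 1) = unitA 1 ⊗ₜ b := fun b => by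
    have h := LinearMap.congr_fun hτ1 (b ⊗ₜ (1 : k))
    simpa using h
  have ht2 : ∀ a : A, τ (unitB 1 ⊗ₜ a) = a ⊗ₜ unitB 1 := fun a => by
    have h := LinearMap.congr_fun hτ2 ((1 : k) ⊗ₜ a)
    simpa using h
  constructor
  · -- the twisted tensor product is a bialgebra → τ is the flip
    intro H
    have H6 := H.2.2.2.2.2
    set M := tMul k mulA mulB τ.toLinearMap with hM
    set C := tComul k comulA comulB τ.symm.toLinearMap with hC
    set jA : A →ₗ[k] A ⊗[k] B := (TensorProduct.mk k A B).flip (unitB 1) with hjA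
    set jB : B →ₗ[k] A ⊗[k] B := TensorProduct.mk k A B (unitA 1) with hjB
    have ht1' : ∀ a, τ.symm (a ⊗ₜ unitB 1) = unitB 1 ⊗ₜ a := fun a => by
      rw [LinearEquiv.symm_apply_eq, ht2]
    have ht2' : ∀ b, τ.symm (unitA 1 ⊗ₜ b) = b ⊗ₜ unitA 1 := fun b => by
      rw [LinearEquiv.symm_apply_eq, ht1]
    have F1 : ∀ u : A ⊗[k] A,
        midMap k τ.symm.toLinearMap (u ⊗ₜ (unitB 1 ⊗ₜ unitB 1))
          = TensorProduct.map jA jA u := by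
      intro u
      induction u using TensorProduct.induction_on with
      | zero => simp
      | tmul x y => simp [midMap_tmul, ht1', hjA, TensorProduct.mk_apply]
      | add u v hu hv => simp only [TensorProduct.add_tmul, map_add, hu, hv]
    have F1' : ∀ v : B ⊗[k] B,
        midMap k τ.symm.toLinearMap ((unitA 1 ⊗ₜ unitA 1) ⊗ₜ v)
          = TensorProduct.map jB jB v := by
      intro v
      induction v using TensorProduct.induction_on with
      | zero => simp
      | tmul p q => simp [midMap_tmul, ht2', hjB, TensorProduct.mk_apply]
      | add u v hu hv => simp only [TensorProduct.tmul_add, map_add, hu, hv]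
    have Mj : ∀ (x : A) (p : B), M ((x ⊗ₜ unitB 1) ⊗ₜ (unitA 1 ⊗ₜ p)) = x ⊗ₜ p := by
      intro x p
      simp [hM, tMul, midMap_tmul, ht2, TensorProduct.mk_apply, hmA2, hmB1]
    have F2 : TensorProduct.map M M
          ∘ₗ (TensorProduct.tensorTensorTensorComm k (A ⊗[k] B) (A ⊗[k] B) (A ⊗[k] B)
                (A ⊗[k] B)).toLinearMap
          ∘ₗ TensorProduct.map (TensorProduct.map jA jA) (TensorProduct.map jB jB)
        = (TensorProduct.tensorTensorTensorComm k A A B B).toLinearMap := by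
      ext x y p q
      simp [TensorProduct.tensorTensorTensorComm_tmul, hjA, hjB, TensorProduct.mk_apply, Mj]
    set cA : A ⊗[k] A →ₗ[k] A :=
      (TensorProduct.lid k A).toLinearMap ∘ₗ TensorProduct.map counitA LinearMap.id with hcAdef
    set cB : B ⊗[k] B →ₗ[k] B :=
      (TensorProduct.rid k B).toLinearMap ∘ₗ TensorProduct.map LinearMap.id counitB with hcBdef
    set g : A ⊗[k] B →ₗ[k] B :=
      (TensorProduct.lid k B).toLinearMap ∘ₗ TensorProduct.map counitA LinearMap.id with hgdef
    set f : A ⊗[k] B →ₗ[k] A :=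
      (TensorProduct.rid k A).toLinearMap ∘ₗ TensorProduct.map LinearMap.id counitB with hfdef
    have F3 : ∀ h : A ⊗[k] B →ₗ[k] B ⊗[k] A,
        TensorProduct.map g f ∘ₗ midMap k h = h ∘ₗ TensorProduct.map cA cB := by
      intro h
      ext x p q y
      simp only [TensorProduct.AlgebraTensorModule.curry_apply, TensorProduct.curry_apply,
        LinearMap.coe_restrictScalars, LinearMap.compr₂_apply, TensorProduct.mk_apply,
        LinearMap.comp_apply, TensorProduct.map_tmul, midMap_tmul]
      have hrhs : h (cA (x ⊗ₜ p) ⊗ₜ cB (q ⊗ₜ y)) = counitA x • counitB y • h (p ⊗ₜ q) := by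
        simp only [hcAdef, hcBdef, LinearMap.comp_apply, TensorProduct.map_tmul,
          LinearEquiv.coe_coe, TensorProduct.lid_tmul, TensorProduct.rid_tmul,
          LinearMap.id_coe, id_eq]
        rw [TensorProduct.tmul_smul, ← TensorProduct.smul_tmul', map_smul, map_smul, smul_comm]
      rw [hrhs]
      generalize h (p ⊗ₜ q) = w
      induction w using TensorProduct.induction_on with
      | zero => simp
      | tmul s r =>
        simp only [TensorProduct.map_tmul, TensorProduct.mk_apply, LinearMap.flip_apply,
          hgdef, hfdef, LinearMap.comp_apply, LinearEquiv.coe_coe, TensorProduct.lid_tmul,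
          TensorProduct.rid_tmul, LinearMap.id_coe, id_eq, ← TensorProduct.smul_tmul',
          TensorProduct.tmul_smul]
        rw [smul_comm]
      | add u v hu hv => simp only [map_add, smul_add, hu, hv]
    have star : ∀ (a : A) (b : B),
        midMap k τ.symm.toLinearMap (comulA a ⊗ₜ comulB b)
          = (TensorProduct.tensorTensorTensorComm k A A B B).toLinearMap
              (comulA a ⊗ₜ comulB b) := by
      intro a b
      have h6 := LinearMap.congr_fun H6 ((a ⊗ₜ unitB 1) ⊗ₜ (unitA 1 ⊗ₜ b))
      rw [LinearMap.comp_apply] at h6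
      rw [Mj a b] at h6
      have hCab : C (a ⊗ₜ b) = midMap k τ.symm.toLinearMap (comulA a ⊗ₜ comulB b) := by
        rw [hC]
        simp only [tComul, LinearMap.comp_apply, TensorProduct.map_tmul]
      rw [hCab] at h6
      have hC1 : C (a ⊗ₜ unitB 1) = TensorProduct.map jA jA (comulA a) := by
        simp only [hC, tComul, LinearMap.comp_apply, TensorProduct.map_tmul, hΔB1]
        exact F1 _
      have hC2 : C (unitA 1 ⊗ₜ b) = TensorProduct.map jB jB (comulB b) := by
        simp only [hC, tComul, LinearMap.comp_apply, TensorProduct.map_tmul, hΔA1]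
        exact F1' _
      rw [LinearMap.comp_apply, LinearMap.comp_apply, TensorProduct.map_tmul, hC1, hC2,
        midMap_comm] at h6
      have hF2 := LinearMap.congr_fun F2 (comulA a ⊗ₜ comulB b)
      simp only [LinearMap.comp_apply, TensorProduct.map_tmul, LinearEquiv.coe_coe] at hF2 h6
      rw [h6, hF2]
      rfl
    have hsymm : ∀ (a : A) (b : B), τ.symm (a ⊗ₜ b) = b ⊗ₜ a := by
      intro a b
      have h1 := congrArg (TensorProduct.map g f) (star a b)
      have h2 := LinearMap.congr_fun (F3 τ.symm.toLinearMap) (comulA a ⊗ₜ comulB b)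
      have h3 := LinearMap.congr_fun (F3 (TensorProduct.comm k A B).toLinearMap)
        (comulA a ⊗ₜ comulB b)
      rw [← midMap_comm] at h1
      simp only [LinearMap.comp_apply, LinearEquiv.coe_coe] at h1 h2 h3
      rw [h2, h3] at h1
      have hca : cA (comulA a) = a := by
        simpa [hcAdef, LinearMap.comp_apply] using hcA1 a
      have hcb : cB (comulB b) = b := by
        simpa [hcBdef, LinearMap.comp_apply] using hcB2 b
      rw [TensorProduct.map_tmul, hca, hcb] at h1
      simpa [TensorProduct.comm_tmul] using h1
    have hsymm' : ∀ z : A ⊗[k] B, τ.symm z = TensorProduct.comm k A B z := by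
      intro z
      induction z using TensorProduct.induction_on with
      | zero => simp
      | tmul a b => simp [hsymm, TensorProduct.comm_tmul]
      | add u v hu hv => simp [map_add, hu, hv]
    apply LinearEquiv.toLinearMap_injective
    apply TensorProduct.ext'
    intro b a
    have hz : τ.symm (a ⊗ₜ b) = TensorProduct.comm k A B (a ⊗ₜ b) := hsymm' _
    rw [TensorProduct.comm_tmul] at hz
    have hz2 := congrArg τ hz
    rw [LinearEquiv.apply_symm_apply] at hz2
    simp [← hz2, TensorProduct.comm_tmul]
  · -- τ is the flip → the (un)twisted tensor product is a bialgebra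
    intro hτeq
    subst hτeq
    have hcs : (TensorProduct.comm k B A).symm = TensorProduct.comm k A B := by
      apply LinearEquiv.toLinearMap_injective
      apply TensorProduct.ext'
      intro a b
      simp [TensorProduct.comm_symm_tmul, TensorProduct.comm_tmul]
    rw [hcs]
    have KeyM : tMul k mulA mulB (TensorProduct.comm k B A).toLinearMap
        = TensorProduct.map mulA mulB
            ∘ₗ (TensorProduct.tensorTensorTensorComm k A B A B).toLinearMap := by
      simp only [tMul, midMap_comm]
    have KeyC : tComul k comulA comulB (TensorProduct.comm k A B).toLinearMap
        = (TensorProduct.tensorTensorTensorComm k A A B B).toLinearMap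
            ∘ₗ TensorProduct.map comulA comulB := by
      simp only [tComul, midMap_comm]
    have tMul_tmul : ∀ (a : A) (b : B) (a' : A) (b' : B),
        tMul k mulA mulB (TensorProduct.comm k B A).toLinearMap ((a ⊗ₜ b) ⊗ₜ (a' ⊗ₜ b'))
          = mulA (a ⊗ₜ a') ⊗ₜ mulB (b ⊗ₜ b') := fun a b a' b' => by
      simp [KeyM, TensorProduct.tensorTensorTensorComm_tmul]
    have tC_tmul : ∀ (a : A) (b : B),
        tComul k comulA comulB (TensorProduct.comm k A B).toLinearMap (a ⊗ₜ b)
          = (TensorProduct.tensorTensorTensorComm k A A B B).toLinearMap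
              (comulA a ⊗ₜ comulB b) := fun a b => by
      simp [KeyC]
    have tE_tmul : ∀ (a : A) (b : B),
        tCounit k counitA counitB (a ⊗ₜ b) = counitA a * counitB b := fun a b => by
      simp only [tCounit, LinearMap.comp_apply, TensorProduct.map_tmul, LinearEquiv.coe_coe,
        TensorProduct.lid_tmul, smul_eq_mul]
    have tU_one : tUnit k unitA unitB 1 = unitA 1 ⊗ₜ unitB 1 := by
      simp [tUnit, TensorProduct.lid_symm_apply]
    refine ⟨⟨?_, ?_, ?_⟩, ⟨?_, ?_, ?_⟩, ?_, ?_, ?_, ?_⟩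
    · -- left unit
      ext a b
      simp only [TensorProduct.AlgebraTensorModule.curry_apply, TensorProduct.curry_apply,
        LinearMap.coe_restrictScalars, LinearMap.comp_apply, LinearEquiv.coe_coe,
        TensorProduct.lid_symm_apply, TensorProduct.map_tmul, LinearMap.id_coe, id_eq,
        tU_one, tMul_tmul, hmA1, hmB1]
    · -- right unit
      ext a b
      simp only [TensorProduct.AlgebraTensorModule.curry_apply, TensorProduct.curry_apply,
        LinearMap.coe_restrictScalars, LinearMap.comp_apply, LinearEquiv.coe_coe,
        TensorProduct.rid_symm_apply, TensorProduct.map_tmul, LinearMap.id_coe, id_eq,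
        tU_one, tMul_tmul, hmA2, hmB2]
    · -- associativity
      ext a b a' b' a'' b''
      simp only [TensorProduct.AlgebraTensorModule.curry_apply, TensorProduct.curry_apply,
        LinearMap.coe_restrictScalars, LinearMap.comp_apply, LinearEquiv.coe_coe,
        TensorProduct.map_tmul, LinearMap.id_coe, id_eq, TensorProduct.assoc_tmul,
        tMul_tmul, hassA, hassB]
    · -- left counit
      have claimL : (TensorProduct.lid k (A ⊗[k] B)).toLinearMap
            ∘ₗ TensorProduct.map (tCounit k counitA counitB) LinearMap.id
            ∘ₗ (TensorProduct.tensorTensorTensorComm k A A B B).toLinearMap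
          = TensorProduct.map
              ((TensorProduct.lid k A).toLinearMap ∘ₗ TensorProduct.map counitA LinearMap.id)
              ((TensorProduct.lid k B).toLinearMap
                ∘ₗ TensorProduct.map counitB LinearMap.id) := by
        ext x y p q
        simp [TensorProduct.tensorTensorTensorComm_tmul, tE_tmul, TensorProduct.smul_tmul',
          TensorProduct.tmul_smul, smul_smul, mul_comm]
      ext a b
      have h := LinearMap.congr_fun claimL (comulA a ⊗ₜ comulB b)
      simp only [LinearMap.comp_apply, LinearEquiv.coe_coe, TensorProduct.map_tmul] at h
      simp only [TensorProduct.AlgebraTensorModule.curry_apply, TensorProduct.curry_apply,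
        LinearMap.coe_restrictScalars, LinearMap.comp_apply, LinearEquiv.coe_coe,
        LinearMap.id_coe, id_eq, tC_tmul]
      rw [h, hcA1 a, hcB1 b]
    · -- right counit
      have claimR : (TensorProduct.rid k (A ⊗[k] B)).toLinearMap
            ∘ₗ TensorProduct.map LinearMap.id (tCounit k counitA counitB)
            ∘ₗ (TensorProduct.tensorTensorTensorComm k A A B B).toLinearMap
          = TensorProduct.map
              ((TensorProduct.rid k A).toLinearMap ∘ₗ TensorProduct.map LinearMap.id counitA)
              ((TensorProduct.rid k B).toLinearMap
                ∘ₗ TensorProduct.map LinearMap.id counitB) := by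
        ext x y p q
        simp [TensorProduct.tensorTensorTensorComm_tmul, tE_tmul, TensorProduct.smul_tmul',
          TensorProduct.tmul_smul, smul_smul, mul_comm]
      ext a b
      have h := LinearMap.congr_fun claimR (comulA a ⊗ₜ comulB b)
      simp only [LinearMap.comp_apply, LinearEquiv.coe_coe, TensorProduct.map_tmul] at h
      simp only [TensorProduct.AlgebraTensorModule.curry_apply, TensorProduct.curry_apply,
        LinearMap.coe_restrictScalars, LinearMap.comp_apply, LinearEquiv.coe_coe,
        LinearMap.id_coe, id_eq, tC_tmul]
      rw [h, hcA2 a, hcB2 b]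
    · -- coassociativity
      have h2 := ttc_nat (k := k) comulA (LinearMap.id (R := k) (M := A)) comulB
        (LinearMap.id (R := k) (M := B))
      rw [TensorProduct.map_id] at h2
      have h3 := ttc_nat (k := k) (LinearMap.id (R := k) (M := A)) comulA
        (LinearMap.id (R := k) (M := B)) comulB
      rw [TensorProduct.map_id] at h3
      have mapsplit : ∀ z : (A ⊗[k] B) ⊗[k] (A ⊗[k] B),
          TensorProduct.map ((TensorProduct.tensorTensorTensorComm k A A B B).toLinearMap
              ∘ₗ TensorProduct.map comulA comulB) LinearMap.id z
            = TensorProduct.map (TensorProduct.tensorTensorTensorComm k A A B B).toLinearMap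
                LinearMap.id
                (TensorProduct.map (TensorProduct.map comulA comulB) LinearMap.id z) := by
        intro z
        induction z using TensorProduct.induction_on with
        | zero => simp
        | tmul m n => simp
        | add u v hu hv => simp only [map_add, hu, hv]
      have mapsplit2 : ∀ z : (A ⊗[k] B) ⊗[k] (A ⊗[k] B),
          TensorProduct.map LinearMap.id
              ((TensorProduct.tensorTensorTensorComm k A A B B).toLinearMap
                ∘ₗ TensorProduct.map comulA comulB) z
            = TensorProduct.map LinearMap.id
                (TensorProduct.tensorTensorTensorComm k A A B B).toLinearMap
                (TensorProduct.map LinearMap.id (TensorProduct.map comulA comulB) z) := by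
        intro z
        induction z using TensorProduct.induction_on with
        | zero => simp
        | tmul m n => simp
        | add u v hu hv => simp only [map_add, hu, hv]
      have shuf : TensorProduct.map
              (TensorProduct.tensorTensorTensorComm k A A B B).toLinearMap LinearMap.id
            ∘ₗ (TensorProduct.tensorTensorTensorComm k (A ⊗[k] A) A (B ⊗[k] B) B).toLinearMap
            ∘ₗ TensorProduct.map (TensorProduct.assoc k A A A).symm.toLinearMap
                (TensorProduct.assoc k B B B).symm.toLinearMap
          = (TensorProduct.assoc k (A ⊗[k] B) (A ⊗[k] B) (A ⊗[k] B)).symm.toLinearMap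
            ∘ₗ TensorProduct.map LinearMap.id
                (TensorProduct.tensorTensorTensorComm k A A B B).toLinearMap
            ∘ₗ (TensorProduct.tensorTensorTensorComm k A (A ⊗[k] A) B (B ⊗[k] B)).toLinearMap
          := by
        ext x y z p q r
        simp [TensorProduct.tensorTensorTensorComm_tmul, TensorProduct.assoc_symm_tmul]
      ext a b
      simp only [TensorProduct.AlgebraTensorModule.curry_apply, TensorProduct.curry_apply,
        LinearMap.coe_restrictScalars, LinearMap.comp_apply, LinearEquiv.coe_coe, tC_tmul]
      rw [KeyC, mapsplit, mapsplit2]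
      have h2w := LinearMap.congr_fun h2 (comulA a ⊗ₜ comulB b)
      simp only [LinearMap.comp_apply, LinearEquiv.coe_coe, TensorProduct.map_tmul] at h2w
      have h3w := LinearMap.congr_fun h3 (comulA a ⊗ₜ comulB b)
      simp only [LinearMap.comp_apply, LinearEquiv.coe_coe, TensorProduct.map_tmul] at h3w
      rw [← h2w, ← h3w]
      rw [hcoA a, hcoB b]
      have hs := LinearMap.congr_fun shuf
        ((TensorProduct.map LinearMap.id comulA (comulA a))
          ⊗ₜ (TensorProduct.map LinearMap.id comulB (comulB b)))
      simp only [LinearMap.comp_apply, LinearEquiv.coe_coe, TensorProduct.map_tmul] at hs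
      exact hs
    · -- counit is multiplicative
      ext a b a' b'
      simp only [TensorProduct.AlgebraTensorModule.curry_apply, TensorProduct.curry_apply,
        LinearMap.coe_restrictScalars, LinearMap.comp_apply, LinearEquiv.coe_coe,
        TensorProduct.map_tmul, tMul_tmul, tE_tmul, hεmA, hεmB, TensorProduct.lid_tmul,
        smul_eq_mul]
      ring
    · -- comultiplication preserves the unit
      apply LinearMap.ext_ring
      simp only [LinearMap.comp_apply, LinearEquiv.coe_coe, TensorProduct.lid_symm_apply,
        TensorProduct.map_tmul, tU_one, tC_tmul, hΔA1, hΔB1]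
      simp [TensorProduct.tensorTensorTensorComm_tmul, tU_one]
    · -- counit preserves the unit
      apply LinearMap.ext_ring
      simp [tU_one, tE_tmul, hεA1, hεB1]
    · -- compatibility of multiplication and comultiplication
      rw [midMap_comm]
      have R7a : (TensorProduct.tensorTensorTensorComm k A A B B).toLinearMap
            ∘ₗ TensorProduct.map
                (TensorProduct.map mulA mulA
                  ∘ₗ (TensorProduct.tensorTensorTensorComm k A A A A).toLinearMap)
                (TensorProduct.map mulB mulB
                  ∘ₗ (TensorProduct.tensorTensorTensorComm k B B B B).toLinearMap)
          = TensorProduct.map (tMul k mulA mulB (TensorProduct.comm k B A).toLinearMap)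
                (tMul k mulA mulB (TensorProduct.comm k B A).toLinearMap)
            ∘ₗ (TensorProduct.tensorTensorTensorComm k (A ⊗[k] B) (A ⊗[k] B) (A ⊗[k] B)
                  (A ⊗[k] B)).toLinearMap
            ∘ₗ TensorProduct.map
                (TensorProduct.tensorTensorTensorComm k A A B B).toLinearMap
                (TensorProduct.tensorTensorTensorComm k A A B B).toLinearMap
            ∘ₗ (TensorProduct.tensorTensorTensorComm k (A ⊗[k] A) (A ⊗[k] A) (B ⊗[k] B)
                  (B ⊗[k] B)).toLinearMap := by
        ext x y x' y' p q p' q'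
        simp [TensorProduct.tensorTensorTensorComm_tmul, tMul_tmul]
      ext a b a' b'
      simp only [TensorProduct.AlgebraTensorModule.curry_apply, TensorProduct.curry_apply,
        LinearMap.coe_restrictScalars, LinearMap.comp_apply, LinearEquiv.coe_coe,
        TensorProduct.map_tmul, tMul_tmul, tC_tmul]
      rw [hΔmA, hΔmB]
      have h := LinearMap.congr_fun R7a ((comulA a ⊗ₜ comulA a') ⊗ₜ (comulB b ⊗ₜ comulB b'))
      simp only [LinearMap.comp_apply, LinearEquiv.coe_coe, TensorProduct.map_tmul,
        TensorProduct.tensorTensorTensorComm_tmul] at h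
      exact h
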